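/- Let K be a field of characteristic p = 7ℓ+2 with ℓ ≥ 1, and suppose a₀,...,a_{2ℓ-1} ∈ K satisfy, for every i with 1 ≤ i ≤ 2ℓ+1, the equation Σ_{j=1}^{2ℓ} a_{j-1} · C(4ℓ+1, 2ℓ+i-j) = δ_{i,ℓ+1} in K (Kronecker delta). Then a contradiction follows; i.e., no such a₀,...,a_{2ℓ-1} exist. -/

import Mathlib

/-!
The matrix `C(4ℓ+1, 2ℓ+i-j)` has an explicit left null vector over `ℤ`, namely
`w i = (-1)^i P(i)` for `0 ≤ i ≤ 2ℓ`, where `P = ∏ (X - t)` over the integers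
`t ∈ [-2ℓ, 4ℓ] \ [0, 2ℓ]`. Pairing `w` with column `j` gives, up to sign, the
`(4ℓ+1)`-st forward difference of `P` at `j - 2ℓ`: the extra sample points of that
difference lie in `[-2ℓ, 4ℓ]` outside `[0, 2ℓ]`, where `P` vanishes. As `deg P = 4ℓ`, this
difference is zero. Pairing `w` with the right-hand side picks out
`w ℓ = ±∏ (ℓ - t)`, a product of integers of absolute value at most `3ℓ < p`,
hence nonzero in `K`.
-/

/-- Binomial coefficient with integer lower index, zero when the index is negative. -/
def ch (n : ℕ) (k : ℤ) : ℤ := if 0 ≤ k then n.choose k.toNat else 0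

open Finset Polynomial Matrix

theorem ch_natCast (n s : ℕ) : ch n s = n.choose s := by
  simp [ch]

theorem ch_ne_zero_iff {n : ℕ} {k : ℤ} : ch n k ≠ 0 ↔ 0 ≤ k ∧ k ≤ n := by
  unfold ch
  split_ifs with hk
  · rw [Nat.cast_ne_zero, Nat.choose_ne_zero_iff]
    omega
  · simp [hk]

theorem Polynomial.sum_Icc_negOnePow_mul_eval_mul_ch_eq_zero {P : ℤ[X]} {n : ℕ}
    (hP : P.natDegree < n) (c : ℤ) :
    ∑ i ∈ Icc c (c + n), (i.negOnePow : ℤ) * P.eval i * ch n (i - c) = 0 := by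
  have hΔ := congrFun (fwdDiff_iter_eq_zero_of_degree_lt hP) c
  rw [fwdDiff_iter_eq_sum_shift] at hΔ
  calc _ = ∑ s ∈ range (n + 1), (c.negOnePow * (-1) ^ n : ℤ) *
        (((-1) ^ (n - s) * n.choose s : ℤ) • P.eval (c + s • 1)) := by
        refine sum_nbij' (fun i ↦ (i - c).toNat) (fun s ↦ c + s) ?_ ?_ ?_ ?_ ?_
        · intro i hi; simp only [mem_Icc, mem_range] at hi ⊢; omega
        · intro s hs; simp only [mem_Icc, mem_range] at hs ⊢; omega
        · intro i hi; simp only [mem_Icc] at hi; omega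
        · intro s hs; simp
        · intro i hi
          simp only [mem_Icc] at hi
          obtain ⟨s, rfl⟩ : ∃ s : ℕ, i = c + s := ⟨(i - c).toNat, by omega⟩
          have hs : s ≤ n := by omega
          have hsplit : (-1 : ℤ) ^ n = (-1) ^ s * (-1) ^ (n - s) := by
            rw [← pow_add, Nat.add_sub_cancel' hs]
          have hsq : ((-1 : ℤ) ^ (n - s)) ^ 2 = 1 := by
            rw [← pow_mul, mul_comm, pow_mul]; norm_num
          simp only [Int.negOnePow_add, Int.coe_negOnePow_natCast, Units.val_mul,
            add_sub_cancel_left, ch_natCast, Int.toNat_natCast, nsmul_eq_mul, mul_one, smul_eq_mul]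
          linear_combination (c.negOnePow * n.choose s * P.eval (c + s) : ℤ) *
            (-(-1) ^ (n - s) * hsplit - (-1) ^ s * hsq)
    _ = 0 := by rw [← mul_sum, hΔ, Pi.zero_apply, mul_zero]

theorem Polynomial.sum_fin_neg_one_pow_mul_eval_mul_ch_eq_zero {P : ℤ[X]} {m n : ℕ}
    (hP : P.natDegree < n) (c : ℤ)
    (hvanish : ∀ i ∈ Icc c (c + n), P.eval i ≠ 0 → 0 ≤ i ∧ i ≤ m) :
    ∑ i : Fin (m + 1), (-1) ^ (i : ℕ) * P.eval (i : ℤ) * ch n (i - c) = 0 := by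
  rw [← P.sum_Icc_negOnePow_mul_eval_mul_ch_eq_zero hP c]
  refine sum_bij_ne_zero (fun i _ _ ↦ (i : ℤ)) ?_ ?_ ?_ ?_
  · intro i _ hne
    have := ch_ne_zero_iff.mp (right_ne_zero_of_mul hne)
    simp only [mem_Icc]
    omega
  · intro i _ _ j _ _ hij
    exact Fin.ext (by exact_mod_cast hij)
  · intro k hk hne
    have hk' := hvanish k hk (right_ne_zero_of_mul (left_ne_zero_of_mul hne))
    lift k to ℕ using hk'.1
    refine ⟨⟨k, by omega⟩, mem_univ _, ?_, rfl⟩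
    rwa [Int.coe_negOnePow_natCast] at hne
  · intro i _ _
    rw [Int.coe_negOnePow_natCast]

noncomputable def nullVectorPoly (m : ℕ) : ℤ[X] :=
  ∏ t ∈ Icc (-(m : ℤ)) (2 * m) \ Icc 0 (m : ℤ), (X - C t)

theorem natDegree_nullVectorPoly (m : ℕ) : (nullVectorPoly m).natDegree = 2 * m := by
  rw [nullVectorPoly, natDegree_finsetProd_X_sub_C_eq_card, card_sdiff_of_subset, Int.card_Icc,
    Int.card_Icc]
  · omega
  · intro t; simp only [mem_Icc]; omega

theorem mem_Icc_of_eval_nullVectorPoly_ne_zero {m : ℕ} {i : ℤ} (hi : -(m : ℤ) ≤ i ∧ i ≤ 2 * m)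
    (hne : (nullVectorPoly m).eval i ≠ 0) : 0 ≤ i ∧ i ≤ m := by
  by_contra hout
  refine hne ?_
  rw [nullVectorPoly, eval_prod]
  refine prod_eq_zero (i := i) ?_ (by simp)
  simp only [mem_sdiff, mem_Icc]
  omega

theorem cast_eval_nullVectorPoly_ne_zero {K : Type*} [CommRing K] [IsDomain K] {p m : ℕ}
    [CharP K p] (hmp : 2 * m < p) {i : ℤ} (hi : 0 ≤ i ∧ i ≤ m) :
    (((nullVectorPoly m).eval i : ℤ) : K) ≠ 0 := by
  rw [nullVectorPoly, eval_prod, Int.cast_prod, prod_ne_zero_iff]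
  intro t ht
  simp only [mem_sdiff, mem_Icc] at ht
  rw [eval_sub, eval_X, eval_C, Ne, CharP.intCast_eq_zero_iff K p]
  intro hdvd
  have := Int.eq_zero_of_abs_lt_dvd hdvd (abs_lt.mpr ⟨by omega, by omega⟩)
  omega

theorem Matrix.mulVec_ne_of_vecMul_eq_zero {m n R : Type*} [Fintype m] [Fintype n]
    [CommSemiring R] {M : Matrix m n R} {w : m → R} (hw : w ᵥ* M = 0) {b : m → R} (hb : w ⬝ᵥ b ≠ 0)
    (a : n → R) : M *ᵥ a ≠ b := by
  rintro rfl
  exact hb (by rw [dotProduct_mulVec, hw, zero_dotProduct])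

theorem no_solution_general {K : Type*} [Field K] (p ℓ : ℕ)
    (hpl : p = 7 * ℓ + 2) [CharP K p] (a : Fin (2 * ℓ) → K)
    (h : ∀ i : Fin (2 * ℓ + 1), ∑ j : Fin (2 * ℓ),
        a j * ((ch (4 * ℓ + 1) ((2 * ℓ + (i : ℕ) : ℤ) - (j : ℕ)) : ℤ) : K) =
      if (i : ℕ) = ℓ then 1 else 0) :
    False := by
  let M : Matrix (Fin (2 * ℓ + 1)) (Fin (2 * ℓ)) K :=
    of fun i j ↦ ((ch (4 * ℓ + 1) ((2 * ℓ + (i : ℕ) : ℤ) - (j : ℕ)) : ℤ) : K)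
  let w : Fin (2 * ℓ + 1) → K :=
    fun i ↦ (((-1) ^ (i : ℕ) * (nullVectorPoly (2 * ℓ)).eval (i : ℤ) : ℤ) : K)
  have hwM : w ᵥ* M = 0 := by
    ext j
    have hcol := (nullVectorPoly (2 * ℓ)).sum_fin_neg_one_pow_mul_eval_mul_ch_eq_zero
      (n := 4 * ℓ + 1) (by rw [natDegree_nullVectorPoly]; omega) ((j : ℕ) - (2 * ℓ : ℕ))
      fun i hi hne ↦
        mem_Icc_of_eval_nullVectorPoly_ne_zero (by simp only [mem_Icc] at hi; omega) hne
    simp only [vecMul, dotProduct, M, w, of_apply, Pi.zero_apply]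
    rw [← Int.cast_zero (R := K), ← hcol]
    push_cast
    refine sum_congr rfl fun i _ ↦ ?_
    ring_nf
  have hw : w ⬝ᵥ (fun i ↦ if (i : ℕ) = ℓ then 1 else 0) ≠ 0 := by
    rw [dotProduct, sum_eq_single ⟨ℓ, by omega⟩
      (fun i _ hi ↦ by rw [if_neg (hi ∘ Fin.ext), mul_zero]) (by simp), if_pos rfl, mul_one]
    simp only [w, Int.cast_mul]
    exact mul_ne_zero (by simp) (cast_eval_nullVectorPoly_ne_zero (p := p) (by omega) (by omega))
  exact mulVec_ne_of_vecMul_eq_zero hwM hw a (funext fun i ↦ by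
    rw [← h i]; simp only [mulVec, dotProduct, M, of_apply, mul_comm])

/-- For p = 7ℓ+2 prime, ℓ ≥ 1, char K = p: there are no a₀,…,a_{2ℓ-1} ∈ K with
∑_{j=1}^{2ℓ} a_{j-1} C(4ℓ+1, 2ℓ+i-j) = δ_{i,ℓ+1} for all 1 ≤ i ≤ 2ℓ+1. -/
theorem no_solution {K : Type*} [Field K] (p ℓ : ℕ) (hl : 1 ≤ ℓ) (hp : p.Prime)
    (hpl : p = 7 * ℓ + 2) [CharP K p] (a : Fin (2 * ℓ) → K)
    (h : ∀ i : Fin (2 * ℓ + 1), ∑ j : Fin (2 * ℓ),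
        a j * ((ch (4 * ℓ + 1) ((2 * ℓ + (i : ℕ) : ℤ) - (j : ℕ)) : ℤ) : K) =
      if (i : ℕ) = ℓ then 1 else 0) :
    False :=
  no_solution_general p ℓ hpl a h
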